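/- For any x < y in [0, ∞) and any t ∈ [0, T], and for every stopping time τ with values in [0, T − t], the gain difference satisfies G(t + τ, X_τ^y) − G(t + τ, X_τ^x) ≤ (y − x)·(2(y + 1) + 4 max_{0≤s≤T}|B_s^μ| + 2c) almost surely, where c = sup_{z≥0} z(1 − F^μ(T, z)) < ∞. -/

import Mathlib

open Set MeasureTheory ProbabilityTheory

/-- Standard normal CDF. -/
noncomputable def stdNormalCDF (x : ℝ) : ℝ :=
  ∫ t in Iic x, (Real.sqrt (2 * Real.pi))⁻¹ * Real.exp (-(t ^ 2) / 2)

/-- The CDF of the maximum of Brownian motion with drift `μ` over `[0, s]`. -/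
noncomputable def Fmu (μ s z : ℝ) : ℝ :=
  stdNormalCDF ((z - μ * s) / Real.sqrt s)
    - Real.exp (2 * μ * z) * stdNormalCDF ((-z - μ * s) / Real.sqrt s)

variable {Ω : Type*} [MeasurableSpace Ω]

/-- `B` is a standard Brownian motion on `[0, ∞)` under `P`: it starts at `0`, has
continuous paths, measurable marginals, Gaussian stationary increments and
independent increments. -/
def IsStandardBM (P : Measure Ω) (B : ℝ → Ω → ℝ) : Prop :=
  (∀ ω, B 0 ω = 0) ∧
  (∀ ω, Continuous fun t => B t ω) ∧
  (∀ t, Measurable (B t)) ∧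
  (∀ s t : ℝ, 0 ≤ s → s ≤ t →
    Measure.map (fun ω => B t ω - B s ω) P = gaussianReal 0 ((t - s).toNNReal)) ∧
  (∀ (n : ℕ) (t : ℕ → ℝ), Monotone t → (∀ i, 0 ≤ t i) →
    iIndepFun
      (fun (i : Fin n) ω => B (t (i + 1)) ω - B (t i) ω) P)

/-- Brownian motion with drift `μ`. -/
noncomputable def Bdrift (B : ℝ → Ω → ℝ) (μ t : ℝ) (ω : Ω) : ℝ := B t ω + μ * t

/-- Running maximum of the drifted Brownian motion. -/
noncomputable def Smax (B : ℝ → Ω → ℝ) (μ t : ℝ) (ω : Ω) : ℝ :=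
  sSup ((fun s => Bdrift B μ s ω) '' Icc 0 t)

/-- Natural filtration of `B` (as a family of σ-algebras). -/
noncomputable def natSigma (B : ℝ → Ω → ℝ) (t : ℝ) : MeasurableSpace Ω :=
  ⨆ s ∈ Icc (0:ℝ) t, MeasurableSpace.comap (B s) inferInstance

/-- The process `X_t^x = (x ∨ S_t^μ) - B_t^μ`. -/
noncomputable def Xproc (B : ℝ → Ω → ℝ) (μ x t : ℝ) (ω : Ω) : ℝ :=
  max x (Smax B μ t ω) - Bdrift B μ t ω

/-- The gain function `G(t, x) = x² + 2∫_x^∞ z (1 - F^μ(T - t, z)) dz`. -/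
noncomputable def Gfun (μ T t x : ℝ) : ℝ :=
  x ^ 2 + 2 * ∫ z in Ioi x, z * (1 - Fmu μ (T - t) z)

/-- `c = sup_{z ≥ 0} z (1 - F^μ(T, z))`. -/
noncomputable def cConst (μ T : ℝ) : ℝ :=
  sSup {r : ℝ | ∃ z : ℝ, 0 ≤ z ∧ r = z * (1 - Fmu μ T z)}

/-- `Z = 2(y+1) + 4 max_{0≤s≤T} |B_s^μ| + 2c`. -/
noncomputable def Zrv (B : ℝ → Ω → ℝ) (μ T y : ℝ) (ω : Ω) : ℝ :=
  2 * (y + 1) + 4 * sSup ((fun s => |Bdrift B μ s ω|) '' Icc 0 T) + 2 * cConst μ T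

/-!
Fix a path and write `a = X_τ^y`, `b = X_τ^x`, `M = max_{[0,T]} |B^μ|`. Since `x ↦ X^x` is
nondecreasing and 1-Lipschitz and `X^x ≥ 0`, we have `0 ≤ b ≤ a ≤ y + 2M` and `a - b ≤ y - x`.
The integrand `z (1 - F^μ)` of `G` is nonnegative, so `G(a) - G(b) ≤ a² - b² = (a - b)(a + b)`,
which is at most `(y - x)(2y + 4M)`.

That `c` is finite comes from Gaussian tails: `F^μ(T, ·)` is built from the standard normal
CDF, and the Chernoff bound for `N(0, 1)` shows that for `z ≥ |μ| T` both terms of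
`1 - F^μ(T, z)` are at most `exp (-(z - μ T)² / (2 T))`.
-/

open Real

lemma stdNormalCDF_eq_measureReal (x : ℝ) : stdNormalCDF x = (gaussianReal 0 1).real (Iic x) := by
  rw [measureReal_def, gaussianReal_apply_eq_integral _ one_ne_zero, ENNReal.toReal_ofReal
    (setIntegral_nonneg measurableSet_Iic fun _ _ => gaussianPDFReal_nonneg _ _ _)]
  simp [stdNormalCDF, gaussianPDFReal_def]

lemma stdNormalCDF_nonneg (x : ℝ) : 0 ≤ stdNormalCDF x := by
  rw [stdNormalCDF_eq_measureReal]
  exact measureReal_nonneg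

lemma stdNormalCDF_le_one (x : ℝ) : stdNormalCDF x ≤ 1 := by
  rw [stdNormalCDF_eq_measureReal]
  exact measureReal_le_one

lemma monotone_stdNormalCDF : Monotone stdNormalCDF := fun a b hab => by
  simp only [stdNormalCDF_eq_measureReal]
  exact measureReal_mono (Iic_subset_Iic.2 hab)

lemma measureReal_le_le_exp_of_map_eq_gaussianReal {Ω : Type*} [MeasurableSpace Ω]
    {p : Measure Ω} [IsFiniteMeasure p] {X : Ω → ℝ} (hXm : AEMeasurable X p)
    (hX : p.map X = gaussianReal 0 1) {ε : ℝ} (hε : 0 ≤ ε) :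
    p.real {ω | ε ≤ X ω} ≤ exp (-ε ^ 2 / 2) := by
  have hint : Integrable (fun ω => exp (ε * X ω)) p := by
    have h := integrable_exp_mul_gaussianReal (μ := 0) (v := 1) ε
    rw [← hX] at h
    exact h.comp_aemeasurable hXm
  calc p.real {ω | ε ≤ X ω} ≤ exp (-ε * ε) * mgf X p ε := measure_ge_le_exp_mul_mgf ε hε hint
    _ = exp (-ε ^ 2 / 2) := by
      rw [mgf_gaussianReal hX, ← exp_add]
      congr 1
      push_cast
      ring

lemma one_sub_stdNormalCDF_le {u : ℝ} (hu : 0 ≤ u) : 1 - stdNormalCDF u ≤ exp (-u ^ 2 / 2) := by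
  rw [stdNormalCDF_eq_measureReal, ← probReal_compl_eq_one_sub measurableSet_Iic, compl_Iic]
  calc (gaussianReal 0 1).real (Ioi u) ≤ (gaussianReal 0 1).real {x | u ≤ x} :=
        measureReal_mono Ioi_subset_Ici_self
    _ ≤ exp (-u ^ 2 / 2) :=
        measureReal_le_le_exp_of_map_eq_gaussianReal aemeasurable_id Measure.map_id hu

lemma stdNormalCDF_le_exp {v : ℝ} (hv : v ≤ 0) : stdNormalCDF v ≤ exp (-v ^ 2 / 2) := by
  have h := measureReal_le_le_exp_of_map_eq_gaussianReal (p := gaussianReal 0 1)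
    measurable_neg.aemeasurable (by simp [gaussianReal_map_neg]) (neg_nonneg.2 hv)
  rw [neg_sq] at h
  rw [stdNormalCDF_eq_measureReal]
  convert h using 2
  ext
  simp

lemma one_sub_Fmu_nonneg (μ s z : ℝ) : 0 ≤ 1 - Fmu μ s z := by
  unfold Fmu
  nlinarith [stdNormalCDF_le_one ((z - μ * s) / √s), stdNormalCDF_nonneg ((-z - μ * s) / √s),
    exp_pos (2 * μ * z)]

lemma one_sub_Fmu_le_one_add_exp (μ s z : ℝ) : 1 - Fmu μ s z ≤ 1 + exp (2 * μ * z) := by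
  unfold Fmu
  nlinarith [stdNormalCDF_nonneg ((z - μ * s) / √s), stdNormalCDF_le_one ((-z - μ * s) / √s),
    exp_pos (2 * μ * z)]

lemma measurable_Fmu (μ s : ℝ) : Measurable (Fmu μ s) := by
  have := monotone_stdNormalCDF.measurable
  unfold Fmu
  fun_prop

lemma one_sub_Fmu_le_two_mul_exp {μ s z : ℝ} (hs : 0 < s) (hz : |μ| * s ≤ z) :
    1 - Fmu μ s z ≤ 2 * exp (-((z - μ * s) ^ 2 / (2 * s))) := by
  have hsqrt : 0 < √s := sqrt_pos.2 hs
  have hμs : |μ * s| ≤ z := by rwa [abs_mul, abs_of_pos hs]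
  have hu : 0 ≤ (z - μ * s) / √s := div_nonneg (by linarith [le_abs_self (μ * s)]) hsqrt.le
  have hv : (-z - μ * s) / √s ≤ 0 := div_nonpos_of_nonpos_of_nonneg
    (by linarith [neg_abs_le (μ * s)]) hsqrt.le
  -- the reflection factor `exp (2 μ z)` turns the lower-tail bound into the upper-tail one
  have hexp : exp (2 * μ * z) * exp (-((-z - μ * s) / √s) ^ 2 / 2)
      = exp (-((z - μ * s) ^ 2 / (2 * s))) := by
    rw [← exp_add, div_pow, sq_sqrt hs.le]
    congr 1
    field_simp
    ring
  have hupper : 1 - stdNormalCDF ((z - μ * s) / √s) ≤ exp (-((z - μ * s) ^ 2 / (2 * s))) := by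
    convert one_sub_stdNormalCDF_le hu using 2
    rw [div_pow, sq_sqrt hs.le]
    ring
  have hlower := mul_le_mul_of_nonneg_left (stdNormalCDF_le_exp hv) (exp_pos (2 * μ * z)).le
  rw [hexp] at hlower
  unfold Fmu
  linarith

lemma mul_one_sub_Fmu_le {μ s z : ℝ} (hs : 0 < s) (hz₁ : 1 ≤ z) (hz : 2 * |μ| * s ≤ z) :
    z * (1 - Fmu μ s z) ≤ 16 * s := by
  set w := (z - μ * s) ^ 2 / (2 * s)
  have hμs : μ * s ≤ |μ| * s := mul_le_mul_of_nonneg_right (le_abs_self μ) hs.le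
  have hw : z ^ 2 ≤ 8 * s * w := by
    have : z ^ 2 / 4 ≤ (z - μ * s) ^ 2 := by nlinarith
    simp only [w]
    field_simp
    linarith
  have hwexp : w * exp (-w) ≤ 1 :=
    (mul_exp_neg_le_exp_neg_one w).trans (exp_le_one_iff.2 (by norm_num))
  have h1 := one_sub_Fmu_le_two_mul_exp hs (by nlinarith [abs_nonneg μ] : |μ| * s ≤ z)
  calc z * (1 - Fmu μ s z) ≤ z * (2 * exp (-w)) := by gcongr
    _ ≤ 2 * (z ^ 2 * exp (-w)) := by rw [mul_left_comm]; gcongr; nlinarith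
    _ ≤ 2 * (8 * s * (w * exp (-w))) := by rw [← mul_assoc (8 * s)]; gcongr
    _ ≤ 16 * s := by nlinarith

lemma mul_one_sub_Fmu_le_of_mem_Icc {μ s z R : ℝ} (hz : z ∈ Icc 0 R) :
    z * (1 - Fmu μ s z) ≤ R * (1 + exp (2 * |μ| * R)) := by
  have hμz : 2 * μ * z ≤ 2 * |μ| * R := by
    have := mul_le_mul_of_nonneg_right (le_abs_self μ) hz.1
    have := mul_le_mul_of_nonneg_left hz.2 (abs_nonneg μ)
    linarith
  exact mul_le_mul hz.2 ((one_sub_Fmu_le_one_add_exp μ s z).trans (by gcongr))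
    (one_sub_Fmu_nonneg μ s z) (hz.1.trans hz.2)

theorem bddAbove_mul_one_sub_Fmu (μ : ℝ) {s : ℝ} (hs : 0 < s) :
    BddAbove {r : ℝ | ∃ z : ℝ, 0 ≤ z ∧ r = z * (1 - Fmu μ s z)} := by
  set R := 2 * |μ| * s + 1
  refine ⟨max (R * (1 + exp (2 * |μ| * R))) (16 * s), ?_⟩
  rintro r ⟨z, hz, rfl⟩
  have hμs : 0 ≤ 2 * |μ| * s := by positivity
  rcases le_total z R with hzR | hRz
  · exact le_max_of_le_left (mul_one_sub_Fmu_le_of_mem_Icc ⟨hz, hzR⟩)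
  · exact le_max_of_le_right (mul_one_sub_Fmu_le hs (by linarith) (by linarith))

lemma cConst_nonneg (μ T : ℝ) : 0 ≤ cConst μ T :=
  Real.sSup_nonneg fun _ ⟨z, hz, hr⟩ => hr ▸ mul_nonneg hz (one_sub_Fmu_nonneg μ T z)

lemma integrableOn_mul_one_sub_Fmu (μ s R : ℝ) :
    IntegrableOn (fun z => z * (1 - Fmu μ s z)) (Icc 0 R) := by
  have hmeas : Measurable fun z => z * (1 - Fmu μ s z) :=
    measurable_id.mul (measurable_const.sub (measurable_Fmu μ s))
  refine IntegrableOn.of_bound measure_Icc_lt_top hmeas.aestronglyMeasurable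
    (R * (1 + exp (2 * |μ| * R))) ((ae_restrict_iff' measurableSet_Icc).2 (ae_of_all _ ?_))
  intro z hz
  rw [Real.norm_eq_abs, abs_of_nonneg (mul_nonneg hz.1 (one_sub_Fmu_nonneg μ s z))]
  exact mul_one_sub_Fmu_le_of_mem_Icc hz

lemma setIntegral_Ioi_le_setIntegral_Ioi {ν : Measure ℝ} {f : ℝ → ℝ} {a b : ℝ} (hba : b ≤ a)
    (hf : ∀ z ∈ Ioc b a, 0 ≤ f z) (hint : IntegrableOn f (Ioc b a) ν) :
    ∫ z in Ioi a, f z ∂ν ≤ ∫ z in Ioi b, f z ∂ν := by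
  have hsplit : Ioi b = Ioc b a ∪ Ioi a := (Ioc_union_Ioi_eq_Ioi hba).symm
  by_cases ha : IntegrableOn f (Ioi a) ν
  · rw [hsplit, setIntegral_union (Ioc_disjoint_Ioi le_rfl) measurableSet_Ioi hint ha]
    linarith [setIntegral_nonneg (μ := ν) measurableSet_Ioc hf]
  · -- both integrals take the junk value `0`
    have hb : ¬ IntegrableOn f (Ioi b) ν := fun h => ha (h.mono_set (hsplit ▸ subset_union_right))
    rw [integral_undef ha, integral_undef hb]

lemma Gfun_sub_Gfun_le {μ T t a b : ℝ} (hb : 0 ≤ b) (hba : b ≤ a) :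
    Gfun μ T t a - Gfun μ T t b ≤ a ^ 2 - b ^ 2 := by
  have := setIntegral_Ioi_le_setIntegral_Ioi (ν := volume) hba
    (fun z hz => mul_nonneg (hb.trans hz.1.le) (one_sub_Fmu_nonneg μ (T - t) z))
    ((integrableOn_mul_one_sub_Fmu μ (T - t) a).mono_set fun z hz => ⟨hb.trans hz.1.le, hz.2⟩)
  unfold Gfun
  linarith

lemma Bdrift_le_Smax {Ω : Type*} {B : ℝ → Ω → ℝ} {μ τ : ℝ} {ω : Ω}
    (hc : Continuous fun s => Bdrift B μ s ω) (hτ : 0 ≤ τ) :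
    Bdrift B μ τ ω ≤ Smax B μ τ ω :=
  le_csSup (isCompact_Icc.bddAbove_image hc.continuousOn) (mem_image_of_mem _ ⟨hτ, le_rfl⟩)

lemma abs_Bdrift_le {Ω : Type*} {B : ℝ → Ω → ℝ} {μ T τ : ℝ} {ω : Ω}
    (hc : Continuous fun s => Bdrift B μ s ω) (hτ : τ ∈ Icc 0 T) :
    |Bdrift B μ τ ω| ≤ sSup ((fun s => |Bdrift B μ s ω|) '' Icc 0 T) :=
  le_csSup (isCompact_Icc.bddAbove_image hc.abs.continuousOn) (mem_image_of_mem _ hτ)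

lemma Smax_le {Ω : Type*} {B : ℝ → Ω → ℝ} {μ T τ : ℝ} {ω : Ω}
    (hc : Continuous fun s => Bdrift B μ s ω) (hτ : τ ∈ Icc 0 T) :
    Smax B μ τ ω ≤ sSup ((fun s => |Bdrift B μ s ω|) '' Icc 0 T) :=
  csSup_le ((nonempty_Icc.2 hτ.1).image _) <| forall_mem_image.2 fun _ hs =>
    (le_abs_self _).trans (abs_Bdrift_le hc ⟨hs.1, hs.2.trans hτ.2⟩)

lemma Xproc_nonneg {Ω : Type*} {B : ℝ → Ω → ℝ} {μ x τ : ℝ} {ω : Ω}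
    (hc : Continuous fun s => Bdrift B μ s ω) (hτ : 0 ≤ τ) : 0 ≤ Xproc B μ x τ ω :=
  sub_nonneg.2 ((Bdrift_le_Smax hc hτ).trans (le_max_right _ _))

lemma Xproc_mono {Ω : Type*} {B : ℝ → Ω → ℝ} {μ x y τ : ℝ} {ω : Ω} (hxy : x ≤ y) :
    Xproc B μ x τ ω ≤ Xproc B μ y τ ω :=
  sub_le_sub_right (max_le_max_right _ hxy) _

lemma Xproc_sub_Xproc_le {Ω : Type*} {B : ℝ → Ω → ℝ} {μ x y τ : ℝ} {ω : Ω} (hxy : x ≤ y) :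
    Xproc B μ y τ ω - Xproc B μ x τ ω ≤ y - x := by
  have h := abs_max_sub_max_le_abs y x (Smax B μ τ ω)
  rw [abs_of_nonneg (sub_nonneg.2 hxy)] at h
  unfold Xproc
  linarith [le_abs_self (max y (Smax B μ τ ω) - max x (Smax B μ τ ω))]

lemma Xproc_le {Ω : Type*} {B : ℝ → Ω → ℝ} {μ T y τ : ℝ} {ω : Ω}
    (hc : Continuous fun s => Bdrift B μ s ω) (hy : 0 ≤ y) (hτ : τ ∈ Icc 0 T) :
    Xproc B μ y τ ω ≤ y + 2 * sSup ((fun s => |Bdrift B μ s ω|) '' Icc 0 T) := by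
  set M := sSup ((fun s => |Bdrift B μ s ω|) '' Icc 0 T)
  have hB : |Bdrift B μ τ ω| ≤ M := abs_Bdrift_le hc hτ
  have hS : max y (Smax B μ τ ω) ≤ y + M :=
    max_le (by linarith [abs_nonneg (Bdrift B μ τ ω)]) (by linarith [Smax_le hc hτ])
  unfold Xproc
  linarith [neg_abs_le (Bdrift B μ τ ω)]

theorem gain_difference_bound_general
    (P : Measure Ω) (B : ℝ → Ω → ℝ)
    (hB : IsStandardBM P B) (μ T : ℝ) (hT : 0 < T)
    (x y t : ℝ) (hx : 0 ≤ x) (hxy : x < y) (ht : t ∈ Icc 0 T)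
    (τ : Ω → ℝ) (hτv : ∀ ω, τ ω ∈ Icc 0 (T - t)) :
    BddAbove {r : ℝ | ∃ z : ℝ, 0 ≤ z ∧ r = z * (1 - Fmu μ T z)} ∧
    ∀ᵐ ω ∂P,
      Gfun μ T (t + τ ω) (Xproc B μ y (τ ω) ω) - Gfun μ T (t + τ ω) (Xproc B μ x (τ ω) ω)
        ≤ (y - x) * Zrv B μ T y ω := by
  refine ⟨bddAbove_mul_one_sub_Fmu μ hT, ae_of_all _ fun ω => ?_⟩
  have hc : Continuous fun s => Bdrift B μ s ω := (hB.2.1 ω).add (continuous_const_mul μ)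
  have hτ : τ ω ∈ Icc 0 T := ⟨(hτv ω).1, by linarith [(hτv ω).2, ht.1]⟩
  set a := Xproc B μ y (τ ω) ω
  set b := Xproc B μ x (τ ω) ω
  set M := sSup ((fun s => |Bdrift B μ s ω|) '' Icc 0 T)
  have hb : 0 ≤ b := Xproc_nonneg hc hτ.1
  have hba : b ≤ a := Xproc_mono hxy.le
  have hab : a - b ≤ y - x := Xproc_sub_Xproc_le hxy.le
  have ha : a ≤ y + 2 * M := Xproc_le hc (hx.trans hxy.le) hτ
  calc Gfun μ T (t + τ ω) a - Gfun μ T (t + τ ω) b ≤ a ^ 2 - b ^ 2 := Gfun_sub_Gfun_le hb hba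
    _ = (a - b) * (a + b) := by ring
    _ ≤ (y - x) * (2 * (y + 2 * M)) := by gcongr <;> linarith
    _ ≤ (y - x) * Zrv B μ T y ω := by
      unfold Zrv
      gcongr
      linarith [cConst_nonneg μ T]

/-- for `0 ≤ x < y`, `t ∈ [0, T]` and any stopping time `τ` with values
in `[0, T - t]`, the gain difference satisfies
`G(t+τ, X_τ^y) - G(t+τ, X_τ^x) ≤ (y - x)(2(y+1) + 4 max_{0≤s≤T}|B_s^μ| + 2c)` a.s.,
where `c = sup_{z≥0} z(1 - F^μ(T, z)) < ∞`. -/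
theorem gain_difference_bound
    (P : Measure Ω) [IsProbabilityMeasure P] (B : ℝ → Ω → ℝ)
    (hB : IsStandardBM P B) (μ T : ℝ) (hT : 0 < T)
    (ℱ : Filtration ℝ ‹MeasurableSpace Ω›) (hℱ : ∀ t, ℱ t = natSigma B t)
    (x y t : ℝ) (hx : 0 ≤ x) (hxy : x < y) (ht : t ∈ Icc 0 T)
    (τ : Ω → ℝ) (hτ : IsStoppingTime ℱ (fun ω => (τ ω : WithTop ℝ))) (hτv : ∀ ω, τ ω ∈ Icc 0 (T - t)) :
    BddAbove {r : ℝ | ∃ z : ℝ, 0 ≤ z ∧ r = z * (1 - Fmu μ T z)} ∧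
    ∀ᵐ ω ∂P,
      Gfun μ T (t + τ ω) (Xproc B μ y (τ ω) ω) - Gfun μ T (t + τ ω) (Xproc B μ x (τ ω) ω)
        ≤ (y - x) * Zrv B μ T y ω :=
  gain_difference_bound_general P B hB μ T hT x y t hx hxy ht τ hτv
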